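/- Let λ ≥ 1 be an integer, M = 2^λ, and μ : ZMod M → ℂ the well-defined map μ(k) = exp(I·(2k+1)·π/M). For all k, k', l, l' ∈ ZMod M with k ≠ k', the equality μ(k) − μ(k') = −(μ(l) − μ(l')) holds if and only if (k = l' and l = k') or (k = l + M/2 and k' = l' + M/2) in ZMod M. -/

import Mathlib

noncomputable def psk (M : ℕ) (k : ZMod M) : ℂ :=
  Complex.exp (Complex.I * (2 * (k.val : ℂ) + 1) * (Real.pi : ℂ) / (M : ℂ))

/-!
Write `a = μ(k)`, `b = μ(l)`, `c = μ(k')`, `d = μ(l')`; the equation says `a + b = c + d`.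
If this sum vanishes, then `b = -a` and `d = -c`, and on `ZMod (2m)` negation of `μ` is the shift
by `m`. Otherwise, since inversion is conjugation on the unit circle, also
`a⁻¹ + b⁻¹ = c⁻¹ + d⁻¹`, whence `ab = cd`; so `{a, b} = {c, d}` as the roots of one quadratic,
and `k ≠ k'` together with injectivity of `μ` leaves `k = l'`, `l = k'`.
-/

open Complex

lemma mul_eq_mul_of_add_eq_add_of_norm_eq_one {a b c d : ℂ} (ha : ‖a‖ = 1) (hb : ‖b‖ = 1)
    (hc : ‖c‖ = 1) (hd : ‖d‖ = 1) (h : a + b = c + d) (h0 : a + b ≠ 0) : a * b = c * d := by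
  have hinv : a⁻¹ + b⁻¹ = c⁻¹ + d⁻¹ := by
    rw [inv_eq_conj ha, inv_eq_conj hb, inv_eq_conj hc, inv_eq_conj hd, ← map_add, ← map_add, h]
  have hne : ∀ {z : ℂ}, ‖z‖ = 1 → z ≠ 0 := fun hz => norm_ne_zero_iff.mp (hz ▸ one_ne_zero)
  rw [inv_add_inv (hne ha) (hne hb), inv_add_inv (hne hc) (hne hd), ← h,
    div_eq_div_iff (mul_ne_zero (hne ha) (hne hb)) (mul_ne_zero (hne hc) (hne hd))] at hinv
  exact (mul_left_cancel₀ h0 (by linear_combination hinv)).symm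

lemma eq_and_eq_or_eq_and_eq_of_add_eq_add_of_mul_eq_mul {R : Type*} [CommRing R] [NoZeroDivisors R]
    {a b c d : R} (hs : a + b = c + d) (hp : a * b = c * d) :
    (a = c ∧ b = d) ∨ (a = d ∧ b = c) := by
  have : (a - c) * (a - d) = 0 := by linear_combination a * hs - hp
  rcases mul_eq_zero.mp this with h | h
  · exact Or.inl ⟨sub_eq_zero.mp h, by linear_combination hs - h⟩
  · exact Or.inr ⟨sub_eq_zero.mp h, by linear_combination hs - h⟩

lemma norm_psk (M : ℕ) (k : ZMod M) : ‖psk M k‖ = 1 := by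
  rw [psk, norm_exp, div_re, mul_re, mul_re]
  simp

lemma psk_eq_exp_mul_stdAddChar (M : ℕ) [NeZero M] (k : ZMod M) :
    psk M k = exp (Real.pi * I / M) * ZMod.stdAddChar k := by
  rw [ZMod.stdAddChar_apply, ZMod.toCircle_apply, psk, ← exp_add]
  congr 1
  ring

lemma psk_injective (M : ℕ) [NeZero M] : Function.Injective (psk M) := fun a b h => by
  rw [psk_eq_exp_mul_stdAddChar, psk_eq_exp_mul_stdAddChar] at h
  exact ZMod.injective_stdAddChar (mul_left_cancel₀ (exp_ne_zero _) h)

lemma psk_add_half {M m : ℕ} [NeZero M] (hM : M = 2 * m) (a : ZMod M) :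
    psk M (a + m) = -psk M a := by
  have hm : (m : ℂ) ≠ 0 := by
    have := NeZero.ne M
    exact_mod_cast (show m ≠ 0 by omega)
  have : ZMod.stdAddChar (m : ZMod M) = -1 := by
    rw [ZMod.stdAddChar_apply, ZMod.toCircle_natCast, ← exp_pi_mul_I, hM]
    congr 1
    push_cast
    field_simp
  rw [psk_eq_exp_mul_stdAddChar, psk_eq_exp_mul_stdAddChar, AddChar.map_add_eq_mul, this]
  ring

theorem psk_diff_eq_neg_diff_iff (lam : ℕ) (hlam : 1 ≤ lam) (M : ℕ) (hM : M = 2 ^ lam)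
    (k k' l l' : ZMod M) (hkk' : k ≠ k') :
    psk M k - psk M k' = -(psk M l - psk M l') ↔
      ((k = l' ∧ l = k') ∨
       (k = l + ((2 ^ (lam - 1) : ℕ) : ZMod M) ∧ k' = l' + ((2 ^ (lam - 1) : ℕ) : ZMod M))) := by
  have hM2 : M = 2 * 2 ^ (lam - 1) := by rw [hM, ← pow_succ']; congr; omega
  have : NeZero M := ⟨hM ▸ pow_ne_zero _ two_ne_zero⟩
  have hhalf := psk_add_half hM2
  have hsum : psk M k - psk M k' = -(psk M l - psk M l') ↔
      psk M k + psk M l = psk M k' + psk M l' := by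
    constructor <;> intro h <;> linear_combination h
  rw [hsum]
  constructor
  · intro h
    by_cases h0 : psk M k + psk M l = 0
    · right
      have h0' : psk M k' + psk M l' = 0 := h ▸ h0
      refine ⟨psk_injective M ?_, psk_injective M ?_⟩
      · rw [hhalf]; linear_combination h0
      · rw [hhalf]; linear_combination h0'
    · left
      have hp := mul_eq_mul_of_add_eq_add_of_norm_eq_one (norm_psk M k) (norm_psk M l)
        (norm_psk M k') (norm_psk M l') h h0
      rcases eq_and_eq_or_eq_and_eq_of_add_eq_add_of_mul_eq_mul h hp with ⟨hk, -⟩ | ⟨hk, hl⟩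
      · exact absurd (psk_injective M hk) hkk'
      · exact ⟨psk_injective M hk, psk_injective M hl⟩
  · rintro (⟨rfl, rfl⟩ | ⟨rfl, rfl⟩)
    · ring
    · rw [hhalf, hhalf]; ring
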